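/- For the negative-variance fairness function, equality of the joint improvement with the sum of local gains, F_var(Z+y) − F_var(Z) = Σᵢ[F_var(Z+yᵢeᵢ) − F_var(Z)], holds if and only if at most one coordinate of y is strictly positive. -/
import Mathlib


open Finset

/-- Negative-variance fairness function. -/
noncomputable def Fvar {n : ℕ} (Z : Fin n → ℝ) : ℝ :=
  -((1 : ℝ) / n) * ∑ i, (Z i - (∑ j, Z j) / n) ^ 2

lemma Fvar_eq {n : ℕ} (hn : 1 ≤ n) (W : Fin n → ℝ) :
    Fvar W = -(∑ i, (W i)^2)/n + (∑ i, W i)^2/(n:ℝ)^2 := by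
  have hn0 : (n:ℝ) ≠ 0 := Nat.cast_ne_zero.mpr (by omega)
  unfold Fvar
  have h1 : ∑ i, (W i - (∑ j, W j)/n)^2
      = ∑ i, (W i)^2 - 2*((∑ j, W j)/n)*(∑ i, W i) + n*((∑ j, W j)/n)^2 := by
    rw [Finset.sum_congr rfl (fun i _ => by ring :
      ∀ i ∈ univ, (W i - (∑ j, W j)/n)^2
        = (W i)^2 - 2*((∑ j, W j)/n)*W i + ((∑ j, W j)/n)^2)]
    rw [Finset.sum_add_distrib, Finset.sum_sub_distrib, ← Finset.mul_sum,
      Finset.sum_const, card_univ, Fintype.card_fin, nsmul_eq_mul]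
  rw [h1]; field_simp; ring

lemma Fvar_key {n : ℕ} (hn : 1 ≤ n) (Z y : Fin n → ℝ) :
    Fvar (Z + y) - Fvar Z - ∑ i, (Fvar (Function.update Z i (Z i + y i)) - Fvar Z)
      = ((∑ i, y i)^2 - ∑ i, (y i)^2)/(n:ℝ)^2 := by
  have hn0 : (n:ℝ) ≠ 0 := Nat.cast_ne_zero.mpr (by omega)
  set A := ∑ i, Z i with hA
  set B := ∑ i, (Z i)^2 with hB
  have hupd1 : ∀ i, ∑ j, Function.update Z i (Z i + y i) j = A + y i := by
    intro i
    rw [Finset.sum_update_of_mem (mem_univ i), ← Finset.erase_eq,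
      Finset.sum_erase_eq_sub (mem_univ i), ← hA]
    ring
  have hupd2 : ∀ i, ∑ j, (Function.update Z i (Z i + y i) j)^2
      = B + 2*Z i*y i + (y i)^2 := by
    intro i
    have h : (fun j => (Function.update Z i (Z i + y i) j)^2)
        = Function.update (fun j => (Z j)^2) i ((Z i + y i)^2) := by
      funext j; by_cases h : j = i
      · subst h; simp
      · simp [h]
    rw [show (∑ j, (Function.update Z i (Z i + y i) j)^2)
        = ∑ j, Function.update (fun j => (Z j)^2) i ((Z i + y i)^2) j from by rw [← h],
      Finset.sum_update_of_mem (mem_univ i), ← Finset.erase_eq,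
      Finset.sum_erase_eq_sub (mem_univ i), ← hB]
    ring
  have hterm : ∀ i, Fvar (Function.update Z i (Z i + y i)) - Fvar Z
      = (1/(n:ℝ)^2) * (2*A*y i + (y i)^2) - (1/(n:ℝ)) * (2*(Z i*y i) + (y i)^2) := by
    intro i
    rw [Fvar_eq hn, Fvar_eq hn, hupd1 i, hupd2 i, ← hA, ← hB]
    field_simp; ring
  have hsum : ∑ i, (Fvar (Function.update Z i (Z i + y i)) - Fvar Z)
      = (1/(n:ℝ)^2) * (2*A*(∑ i, y i) + ∑ i, (y i)^2)
        - (1/(n:ℝ)) * (2*(∑ i, Z i * y i) + ∑ i, (y i)^2) := by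
    rw [Finset.sum_congr rfl (fun i _ => hterm i), Finset.sum_sub_distrib,
      ← Finset.mul_sum, ← Finset.mul_sum, Finset.sum_add_distrib,
      Finset.sum_add_distrib, ← Finset.mul_sum, ← Finset.mul_sum]
  have hadd1 : ∑ i, (Z + y) i = A + ∑ i, y i := by
    simp only [Pi.add_apply]; rw [Finset.sum_add_distrib, ← hA]
  have hadd2 : ∑ i, ((Z + y) i)^2 = B + 2*(∑ i, Z i * y i) + ∑ i, (y i)^2 := by
    have : ∀ i ∈ univ, ((Z + y) i)^2 = (Z i)^2 + 2*(Z i * y i) + (y i)^2 := by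
      intro i _; simp only [Pi.add_apply]; ring
    rw [Finset.sum_congr rfl this, Finset.sum_add_distrib, Finset.sum_add_distrib,
      ← Finset.mul_sum, ← hB]
  rw [hsum, Fvar_eq hn (Z + y), Fvar_eq hn Z, hadd1, hadd2, ← hA, ← hB]
  field_simp; ring

lemma sq_sum_iff_aux {n : ℕ} (y : Fin n → ℝ) (hy : ∀ i, 0 ≤ y i) :
    ((∑ i, y i)^2 = ∑ i, (y i)^2) ↔ (∀ i j, 0 < y i → 0 < y j → i = j) := by
  constructor
  · intro h i j hi hj
    by_contra hij
    have hsub : ({i, j} : Finset (Fin n)) ⊆ univ := subset_univ _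
    have hpair : y i + y j ≤ ∑ k, y k := by
      have := Finset.sum_le_sum_of_subset_of_nonneg hsub (fun k _ _ => hy k)
      rwa [Finset.sum_pair hij] at this
    have hlt : ∑ k, (y k)^2 < (∑ k, y k)^2 := by
      have h1 : ∀ k ∈ univ, (y k)^2 ≤ y k * (∑ l, y l) := by
        intro k _
        have : y k ≤ ∑ l, y l := Finset.single_le_sum (fun l _ => hy l) (mem_univ k)
        calc (y k)^2 = y k * y k := by ring
          _ ≤ y k * (∑ l, y l) := mul_le_mul_of_nonneg_left this (hy k)
      have h2 : (y i)^2 < y i * (∑ l, y l) := by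
        have : y i < ∑ l, y l := lt_of_lt_of_le (by linarith) hpair
        calc (y i)^2 = y i * y i := by ring
          _ < y i * (∑ l, y l) := mul_lt_mul_of_pos_left this hi
      calc ∑ k, (y k)^2 < ∑ k, y k * (∑ l, y l) :=
            Finset.sum_lt_sum h1 ⟨i, mem_univ i, h2⟩
        _ = (∑ k, y k)^2 := by rw [← Finset.sum_mul]; ring
    linarith [h]
  · intro h
    by_cases hex : ∃ i, 0 < y i
    · obtain ⟨i0, hi0⟩ := hex
      have hz : ∀ j ∈ univ, j ≠ i0 → y j = 0 := by
        intro j _ hj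
        rcases lt_or_eq_of_le (hy j) with hpos | heq
        · exact absurd (h j i0 hpos hi0) hj
        · exact heq.symm
      have h1 : ∑ i, y i = y i0 := Finset.sum_eq_single i0 hz (fun h => absurd (mem_univ i0) h)
      have h2 : ∑ i, (y i)^2 = (y i0)^2 :=
        Finset.sum_eq_single i0 (fun j hj hne => by rw [hz j hj hne]; ring)
          (fun h => absurd (mem_univ i0) h)
      rw [h1, h2]
    · push_neg at hex
      have : ∀ i, y i = 0 := fun i => le_antisymm (hex i) (hy i)
      simp [this]

/-- **Equality characterization for negative variance:** the joint improvement
equals the sum of local gains iff at most one coordinate of `y` is strictly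
positive. -/
theorem neg_variance_equality_iff {n : ℕ} (hn : 1 ≤ n)
    (Z y : Fin n → ℝ) (hy : ∀ i, 0 ≤ y i) :
    (Fvar (Z + y) - Fvar Z =
        ∑ i, (Fvar (Function.update Z i (Z i + y i)) - Fvar Z)) ↔
      (∀ i j, 0 < y i → 0 < y j → i = j) := by
  have hn0 : ((n:ℝ)^2) ≠ 0 := pow_ne_zero _ (Nat.cast_ne_zero.mpr (by omega))
  rw [← sub_eq_zero, Fvar_key hn Z y, div_eq_zero_iff, or_iff_left hn0,
    sub_eq_zero, sq_sum_iff_aux y hy]
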